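/- arXiv:1908.05876 — 2 statements merged into one kernel-verified Lean document; each statement's English description precedes it below -/
import Mathlib

section
/- Let f : R → S be a surjective ring homomorphism and let F and G be indecomposable injective right S-modules. If, viewing F and G as right R-modules by restriction of scalars along f, there exist nonzero R-submodules M ≤ F and N ≤ G with M ≅ N as R-modules, then F ≅ G as S-modules. (This establishes injectivity of the map f* : injspec(S) → injspec(R), F ↦ E(F_R).) -/
open MulOpposite

universe u

/-- A module is indecomposable if it is nonzero and is not the internal direct sum of
two nonzero submodules. -/
def IsIndecomposable (R M : Type*) [Ring R] [AddCommGroup M] [Module R M] : Prop :=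
  (∃ x : M, x ≠ 0) ∧
    ∀ A B : Submodule R M, A ⊓ B = ⊥ → A ⊔ B = ⊤ → A = ⊥ ∨ B = ⊥

section Helpers
variable {Λ : Type u} [Ring Λ] {E : Type u} [AddCommGroup E] [Module Λ E]

/-- `A` is an essential submodule of `X`. -/
def EssIn (A X : Submodule Λ E) : Prop :=
  A ≤ X ∧ ∀ W : Submodule Λ E, W ≤ X → W ⊓ A = ⊥ → W = ⊥

lemma uniform_of_indec (inj : Module.Injective Λ E) (hind : IsIndecomposable Λ E)
    (A K : Submodule Λ E) (hA : A ≠ ⊥) (hKA : K ⊓ A = ⊥) : K = ⊥ := by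
  classical
  -- maximal essential extension of A
  set s : Set (Submodule Λ E) := {X | EssIn A X} with hs
  have hAs : A ∈ s := ⟨le_rfl, fun W hW h => by rwa [inf_eq_left.mpr hW] at h⟩
  obtain ⟨Astar, hAle, hmax⟩ := zorn_le_nonempty₀ s (fun c hcs hc y hy => by
    refine ⟨sSup c, ⟨le_trans (hcs hy).1 (le_sSup hy), ?_⟩, fun z hz => le_sSup hz⟩
    intro W hW hWA
    rw [Submodule.eq_bot_iff]
    intro w hw
    obtain ⟨X, hXc, hwX⟩ := (Submodule.mem_sSup_of_directed ⟨y, hy⟩ hc.directedOn).mp (hW hw)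
    have h1 : (Λ ∙ w) ≤ X := (Submodule.span_singleton_le_iff_mem w X).mpr hwX
    have h2 : (Λ ∙ w) ⊓ A = ⊥ := by
      rw [eq_bot_iff]
      refine le_trans (inf_le_inf_right A ?_) hWA.le
      exact (Submodule.span_singleton_le_iff_mem w W).mpr hw
    have := (hcs hXc).2 _ h1 h2
    have hmem : w ∈ (Λ ∙ w) := Submodule.mem_span_singleton_self w
    rw [this] at hmem
    simpa using hmem) A hAs
  have hAAstar : A ≤ Astar := hmax.prop.1
  have hKAstar : K ⊓ Astar = ⊥ := by
    refine hmax.prop.2 _ inf_le_right ?_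
    rw [inf_assoc, inf_of_le_right hAAstar, hKA]
  -- maximal complement C of Astar containing K
  set t : Set (Submodule Λ E) := {X | X ⊓ Astar = ⊥} with ht
  obtain ⟨C, hKC, hmaxC⟩ := zorn_le_nonempty₀ t (fun c hcs hc y hy => by
    refine ⟨sSup c, ?_, fun z hz => le_sSup hz⟩
    rw [Set.mem_setOf_eq, eq_bot_iff]
    intro x hx
    obtain ⟨hx1, hx2⟩ := Submodule.mem_inf.mp hx
    obtain ⟨X, hXc, hxX⟩ := (Submodule.mem_sSup_of_directed ⟨y, hy⟩ hc.directedOn).mp hx1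
    have : x ∈ X ⊓ Astar := Submodule.mem_inf.mpr ⟨hxX, hx2⟩
    rwa [hcs hXc] at this) K hKAstar
  have hCAstar : C ⊓ Astar = ⊥ := hmaxC.prop
  -- quotient map and the extension g
  set q : E →ₗ[Λ] E ⧸ C := C.mkQ with hq
  have hqsurj : Function.Surjective q := Submodule.mkQ_surjective C
  have hjinj : Function.Injective (q.comp Astar.subtype) := by
    rw [← LinearMap.ker_eq_bot, LinearMap.ker_comp, Submodule.ker_mkQ]
    rw [Submodule.eq_bot_iff]
    intro a ha
    have : (a : E) ∈ C ⊓ Astar := Submodule.mem_inf.mpr ⟨ha, a.2⟩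
    rw [hCAstar] at this
    exact Subtype.ext (by simpa using this)
  obtain ⟨g, hg⟩ := inj.out (q.comp Astar.subtype) hjinj Astar.subtype
  have hg' : ∀ a : Astar, g (q (a : E)) = (a : E) := fun a => hg a
  -- essentiality of q(Astar) in E/C
  have hess : ∀ W : Submodule Λ (E ⧸ C), W ⊓ Submodule.map q Astar = ⊥ → W = ⊥ := by
    intro W hW
    have hCW : C ≤ W.comap q := by
      intro c hc
      have : q c = 0 := by simpa [hq] using (Submodule.Quotient.mk_eq_zero C).mpr hc
      simp [Submodule.mem_comap, this]
    have hW'A : W.comap q ⊓ Astar = ⊥ := by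
      rw [Submodule.eq_bot_iff]
      intro x hx
      obtain ⟨hx1, hx2⟩ := Submodule.mem_inf.mp hx
      have hqx : q x ∈ W ⊓ Submodule.map q Astar :=
        Submodule.mem_inf.mpr ⟨hx1, Submodule.mem_map_of_mem hx2⟩
      rw [hW] at hqx
      have hx0 : q x = 0 := by simpa using hqx
      have : x ∈ C := (Submodule.Quotient.mk_eq_zero C).mp hx0
      have : x ∈ C ⊓ Astar := Submodule.mem_inf.mpr ⟨this, hx2⟩
      rwa [hCAstar] at this
    have hWC : W.comap q = C := le_antisymm (hmaxC.2 hW'A hCW) hCW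
    have : W = Submodule.map q (W.comap q) :=
      (Submodule.map_comap_eq_of_surjective hqsurj W).symm
    rw [this, hWC]
    rw [Submodule.eq_bot_iff]
    rintro x ⟨c, hc, rfl⟩
    simpa [hq] using (Submodule.Quotient.mk_eq_zero C).mpr hc
  -- g is injective
  have hginj : Function.Injective g := by
    rw [← LinearMap.ker_eq_bot]
    refine hess _ ?_
    rw [Submodule.eq_bot_iff]
    intro x hx
    obtain ⟨hx1, a, ha, rfl⟩ := Submodule.mem_inf.mp hx
    have hga : g (q a) = a := hg' ⟨a, ha⟩
    have hz : g (q a) = 0 := LinearMap.mem_ker.mp hx1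
    rw [hga] at hz
    rw [hz]
    simp
  -- range g = Astar
  have hAstarle : Astar ≤ LinearMap.range g := by
    intro a ha
    exact ⟨q a, hg' ⟨a, ha⟩⟩
  have hrange : LinearMap.range g = Astar := by
    have hessr : EssIn A (LinearMap.range g) := by
      refine ⟨le_trans hAAstar hAstarle, ?_⟩
      intro W hWle hWA
      have hWAstar : W ⊓ Astar = ⊥ := by
        refine hmax.prop.2 _ inf_le_right ?_
        rw [inf_assoc, inf_of_le_right hAAstar, hWA]
      have hW0 : W.comap g ⊓ Submodule.map q Astar = ⊥ := by
        rw [Submodule.eq_bot_iff]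
        intro y hy
        obtain ⟨hy1, a, ha, rfl⟩ := Submodule.mem_inf.mp hy
        have hga : g (q a) = a := hg' ⟨a, ha⟩
        have : g (q a) ∈ W ⊓ Astar := Submodule.mem_inf.mpr ⟨hy1, by rw [hga]; exact ha⟩
        rw [hWAstar] at this
        have hz : g (q a) = 0 := by simpa using this
        exact hginj (by rw [hz, map_zero])
      have hW0' : W.comap g = ⊥ := hess _ hW0
      have : W = Submodule.map g (W.comap g) := by
        rw [Submodule.map_comap_eq, inf_of_le_right hWle]
      rw [this, hW0', Submodule.map_bot]
    exact le_antisymm (hmax.2 hessr hAstarle) hAstarle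
  -- Astar ⊔ C = ⊤
  have hsup : Astar ⊔ C = ⊤ := by
    rw [eq_top_iff]
    intro x _
    have hmem : g (q x) ∈ Astar := by rw [← hrange]; exact ⟨q x, rfl⟩
    have h1 : g (q (g (q x))) = g (q x) := hg' ⟨g (q x), hmem⟩
    have h2 : q (g (q x)) = q x := hginj h1
    have h3 : x - g (q x) ∈ C := by
      have : q (x - g (q x)) = 0 := by rw [map_sub, h2, sub_self]
      exact (Submodule.Quotient.mk_eq_zero C).mp this
    exact Submodule.mem_sup.mpr ⟨g (q x), hmem, x - g (q x), h3, by abel⟩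
  -- conclude
  rcases hind.2 Astar C (by rwa [inf_comm] at hCAstar) hsup with h | h
  · exact absurd (le_antisymm (h ▸ hAAstar) bot_le) hA
  · exact le_antisymm (h ▸ hKC) bot_le
end Helpers

theorem stmt7_aux {R S : Type u} [Ring R] [Ring S] (f : R →+* S)
    (hf : Function.Surjective f)
    {F : Type u} [AddCommGroup F] [Module Sᵐᵒᵖ F]
    (hFind : IsIndecomposable Sᵐᵒᵖ F) (hFinj : Module.Injective Sᵐᵒᵖ F)
    {G : Type u} [AddCommGroup G] [Module Sᵐᵒᵖ G]
    (hGind : IsIndecomposable Sᵐᵒᵖ G) (hGinj : Module.Injective Sᵐᵒᵖ G)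
    [Module Rᵐᵒᵖ F] (hresF : ∀ (r : R) (x : F), (op r : Rᵐᵒᵖ) • x = (op (f r) : Sᵐᵒᵖ) • x)
    [Module Rᵐᵒᵖ G] (hresG : ∀ (r : R) (x : G), (op r : Rᵐᵒᵖ) • x = (op (f r) : Sᵐᵒᵖ) • x)
    (M : Submodule Rᵐᵒᵖ F) (N : Submodule Rᵐᵒᵖ G) (hM : M ≠ ⊥) (hN : N ≠ ⊥)
    (hiso : Nonempty (M ≃ₗ[Rᵐᵒᵖ] N)) :
    Nonempty (F ≃ₗ[Sᵐᵒᵖ] G) := by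
  obtain ⟨u⟩ := hiso
  have hf' : ∀ s : Sᵐᵒᵖ, ∃ r : R, (op (f r) : Sᵐᵒᵖ) = s := by
    intro s
    obtain ⟨r, hr⟩ := hf s.unop
    exact ⟨r, by rw [hr, op_unop]⟩
  -- the S-submodule with the same carrier as M
  let M' : Submodule Sᵐᵒᵖ F :=
    { carrier := M
      add_mem' := fun h1 h2 => M.add_mem h1 h2
      zero_mem' := M.zero_mem
      smul_mem' := by
        intro s x hx
        obtain ⟨r, rfl⟩ := hf' s
        rw [← hresF]
        exact M.smul_mem _ hx }
  have hM'mem : ∀ x : F, x ∈ M' ↔ x ∈ M := fun x => Iff.rfl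
  -- the S-linear map M' → G given by u
  let σ : M' →ₗ[Sᵐᵒᵖ] G :=
    { toFun := fun x => (u ⟨x.1, x.2⟩ : G)
      map_add' := by
        intro x y
        rw [← Submodule.coe_add, ← map_add]
        rfl
      map_smul' := by
        intro s x
        obtain ⟨r, rfl⟩ := hf' s
        have h1 : (⟨(op (f r) : Sᵐᵒᵖ) • x.1, ((op (f r) : Sᵐᵒᵖ) • x).2⟩ : M)
            = (op r : Rᵐᵒᵖ) • ⟨x.1, x.2⟩ := by
          apply Subtype.ext
          rw [Submodule.coe_smul]
          exact (hresF r x.1).symm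
        show (u ⟨(op (f r) : Sᵐᵒᵖ) • x.1, _⟩ : G) = (op (f r) : Sᵐᵒᵖ) • (u ⟨x.1, x.2⟩ : G)
        rw [h1, map_smul, Submodule.coe_smul, hresG] }
  obtain ⟨φ, hφ⟩ := hGinj.out M'.subtype (Submodule.injective_subtype M') σ
  have hφM : ∀ x : M', φ x.1 = (u ⟨x.1, x.2⟩ : G) := fun x => hφ x
  -- φ is injective
  have hM'ne : M' ≠ ⊥ := by
    obtain ⟨x, hxM, hx0⟩ := (Submodule.ne_bot_iff M).mp hM
    exact (Submodule.ne_bot_iff M').mpr ⟨x, hxM, hx0⟩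
  have hker : LinearMap.ker φ ⊓ M' = ⊥ := by
    rw [Submodule.eq_bot_iff]
    intro x hx
    obtain ⟨hx1, hx2⟩ := Submodule.mem_inf.mp hx
    have h1 : φ x = 0 := LinearMap.mem_ker.mp hx1
    have h2 : (u ⟨x, hx2⟩ : G) = 0 := by rw [← hφM ⟨x, hx2⟩]; exact h1
    have h3 : u ⟨x, hx2⟩ = 0 := Subtype.ext h2
    have h4 : (⟨x, hx2⟩ : M) = 0 := by
      apply u.injective
      rw [h3, map_zero]
    simpa using congrArg Subtype.val h4
  have hkerbot : LinearMap.ker φ = ⊥ := uniform_of_indec hFinj hFind M' _ hM'ne hker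
  have hφinj : Function.Injective φ := LinearMap.ker_eq_bot.mp hkerbot
  -- split: extend identity along φ
  obtain ⟨ρ, hρ⟩ := hFinj.out φ hφinj (LinearMap.id : F →ₗ[Sᵐᵒᵖ] F)
  have hρφ : ∀ x : F, ρ (φ x) = x := fun x => hρ x
  have hinf : LinearMap.range φ ⊓ LinearMap.ker ρ = ⊥ := by
    rw [Submodule.eq_bot_iff]
    intro y hy
    obtain ⟨⟨x, rfl⟩, h2⟩ := Submodule.mem_inf.mp hy
    have : ρ (φ x) = 0 := LinearMap.mem_ker.mp h2
    rw [hρφ] at this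
    rw [this, map_zero]
  have hsup : LinearMap.range φ ⊔ LinearMap.ker ρ = ⊤ := by
    rw [eq_top_iff]
    intro y _
    refine Submodule.mem_sup.mpr ⟨φ (ρ y), ⟨ρ y, rfl⟩, y - φ (ρ y), ?_, by abel⟩
    rw [LinearMap.mem_ker, map_sub, hρφ, sub_self]
  rcases hGind.2 _ _ hinf hsup with h | h
  · exfalso
    obtain ⟨x0, hx0⟩ := hFind.1
    have : φ x0 ∈ LinearMap.range φ := ⟨x0, rfl⟩
    rw [h] at this
    have : φ x0 = 0 := by simpa using this
    exact hx0 (hφinj (by rw [this, map_zero]))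
  · have hrtop : LinearMap.range φ = ⊤ := by
      rw [← hsup, h, sup_bot_eq]
    exact ⟨LinearEquiv.ofBijective φ ⟨hφinj, LinearMap.range_eq_top.mp hrtop⟩⟩

theorem stmt7 {R S : Type u} [Ring R] [Ring S] (f : R →+* S)
    (hf : Function.Surjective f)
    -- `F` and `G` are indecomposable injective right `S`-modules:
    {F : Type u} [AddCommGroup F] [Module Sᵐᵒᵖ F]
    (hFind : IsIndecomposable Sᵐᵒᵖ F) (hFinj : Module.Injective Sᵐᵒᵖ F)
    {G : Type u} [AddCommGroup G] [Module Sᵐᵒᵖ G]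
    (hGind : IsIndecomposable Sᵐᵒᵖ G) (hGinj : Module.Injective Sᵐᵒᵖ G)
    -- right `R`-module structures on `F` and `G` by restriction of scalars along `f`:
    [Module Rᵐᵒᵖ F] (hresF : ∀ (r : R) (x : F), (op r : Rᵐᵒᵖ) • x = (op (f r) : Sᵐᵒᵖ) • x)
    [Module Rᵐᵒᵖ G] (hresG : ∀ (r : R) (x : G), (op r : Rᵐᵒᵖ) • x = (op (f r) : Sᵐᵒᵖ) • x)
    -- nonzero isomorphic `R`-submodules `M ≤ F` and `N ≤ G`:
    (M : Submodule Rᵐᵒᵖ F) (N : Submodule Rᵐᵒᵖ G) (hM : M ≠ ⊥) (hN : N ≠ ⊥)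
    (hiso : Nonempty (M ≃ₗ[Rᵐᵒᵖ] N)) :
    Nonempty (F ≃ₗ[Sᵐᵒᵖ] G) :=
  stmt7_aux f hf hFind hFinj hGind hGinj hresF hresG M N hM hN hiso
end

section
/- Let R be a right artinian ring. Then there are only finitely many isomorphism classes of indecomposable injective right R-modules; that is, there exists a finite list of right R-modules E₁, …, Eₙ such that every indecomposable injective right R-module is isomorphic to some Eᵢ. (Hence the injective spectrum of a right artinian ring is a finite discrete space.) -/
open MulOpposite

universe u

/-!
Over a left artinian ring `A` (here `A = Rᵐᵒᵖ`) every nonzero module has a simple submodule,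
and there are only finitely many simple modules up to isomorphism, since each one is a quotient,
hence a summand, of the semisimple module `A ⧸ J(A)`.

In an injective module any two disjoint submodules extend to complementary summands, so an
indecomposable injective module is uniform. Hence if `E`, `E'` are indecomposable injective and
contain isomorphic simple submodules, extending the isomorphism gives a map `E → E'` whose kernel
misses a simple submodule, i.e. an embedding; its image is injective, hence a summand of `E'`,
hence all of `E'`. So `E` is determined by the isomorphism class of any simple submodule.
-/

universe v

theorem exists_le_maximal_disjoint {α : Type*} [CompleteLattice α] [IsCompactlyGenerated α]
    {a b : α} (h : Disjoint a b) : ∃ m, a ≤ m ∧ Maximal (Disjoint · b) m :=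
  zorn_le_nonempty₀ _ (fun c hc hchain _ _ ↦
    ⟨sSup c, hchain.directedOn.disjoint_sSup_left.mpr hc, fun _ ↦ le_sSup⟩) a h

section Injective

variable {A : Type*} [Ring A] {E E' : Type v} [AddCommGroup E] [Module A E]
  [AddCommGroup E'] [Module A E']

theorem Module.Injective.exists_isCompl_of_disjoint [Module.Injective A E]
    {X Y : Submodule A E} (hXY : Disjoint X Y) :
    ∃ P Q : Submodule A E, X ≤ P ∧ Y ≤ Q ∧ IsCompl P Q := by
  obtain ⟨K, hXK, hK⟩ := exists_le_maximal_disjoint hXY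
  obtain ⟨L, hYL, hL⟩ := exists_le_maximal_disjoint hK.prop.symm
  have hi : Function.Injective (K.subtype.coprod L.subtype) := by
    rw [← LinearMap.ker_eq_bot, LinearMap.ker_coprod_of_disjoint_range _ _
      (by simpa using hL.prop.symm)]
    simp
  -- `h` extends the projection `K ⊕ L → L`; its range is `L` since `L` is maximal disjoint from `K`
  obtain ⟨h, hh⟩ := Module.Injective.out _ hi (L.subtype ∘ₗ LinearMap.snd A K L)
  have h_of_mem_K (k : E) (hk : k ∈ K) : h k = 0 := by simpa using hh (⟨k, hk⟩, 0)
  have h_of_mem_L (l : E) (hl : l ∈ L) : h l = l := by simpa using hh (0, ⟨l, hl⟩)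
  have hcomap : K.comap h = K := by
    refine hK.eq_of_ge (Submodule.disjoint_def.mpr fun y hyK hyY ↦ ?_)
      fun k hk ↦ by simp [h_of_mem_K k hk]
    rw [Submodule.mem_comap, h_of_mem_L y (hYL hyY)] at hyK
    exact Submodule.disjoint_def.mp hK.prop y hyK hyY
  have hrange : LinearMap.range h = L := by
    refine hL.eq_of_ge ?_ fun l hl ↦ ⟨l, h_of_mem_L l hl⟩
    rw [disjoint_iff, ← Submodule.map_comap_eq, hcomap, eq_bot_iff, Submodule.map_le_iff_le_comap]
    exact fun k hk ↦ (Submodule.mem_bot A).mpr (h_of_mem_K k hk)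
  refine ⟨LinearMap.ker h, L, fun k hk ↦ h_of_mem_K k (hXK hk), hYL, ?_⟩
  have hproj := LinearMap.isCompl_of_proj (f := h.codRestrict L (hrange ▸ h.mem_range_self))
    fun l ↦ Subtype.ext (h_of_mem_L l l.2)
  simpa using hproj.symm

theorem IsIndecomposable.eq_bot_or_eq_bot_of_disjoint [Module.Injective A E]
    (hE : IsIndecomposable A E) {X Y : Submodule A E} (hXY : Disjoint X Y) : X = ⊥ ∨ Y = ⊥ := by
  obtain ⟨P, Q, hXP, hYQ, hPQ⟩ := Module.Injective.exists_isCompl_of_disjoint hXY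
  rcases hE.2 P Q hPQ.inf_eq_bot hPQ.sup_eq_top with rfl | rfl
  exacts [.inl (le_bot_iff.mp hXP), .inr (le_bot_iff.mp hYQ)]

theorem IsIndecomposable.nonempty_linearEquiv_of_injective [Module.Injective A E] [Nontrivial E]
    (hE' : IsIndecomposable A E') {f : E →ₗ[A] E'} (hf : Function.Injective f) :
    Nonempty (E ≃ₗ[A] E') := by
  obtain ⟨r, hr⟩ := Module.Injective.out f hf LinearMap.id
  have hcompl := LinearMap.isCompl_of_proj (f := f.rangeRestrict ∘ₗ r) fun ⟨_, e, rfl⟩ ↦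
    Subtype.ext (by simp [hr])
  have hker : LinearMap.ker r = ⊥ := by
    rcases hE'.2 _ _ hcompl.inf_eq_bot hcompl.sup_eq_top with hrange | hker
    · exact absurd (LinearMap.range_eq_bot.mp hrange) (f.ne_zero_of_injective hf)
    · simpa [LinearMap.ker_comp, LinearMap.ker_eq_bot.mpr hf] using hker
  exact ⟨(LinearEquiv.ofBijective r ⟨LinearMap.ker_eq_bot.mp hker,
    fun e ↦ ⟨f e, hr e⟩⟩).symm⟩

theorem IsIndecomposable.nonempty_linearEquiv_of_common_submodule
    {S : Type v} [AddCommGroup S] [Module A S] [Nontrivial S]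
    [Module.Injective A E] [Module.Injective A E']
    (hE : IsIndecomposable A E) (hE' : IsIndecomposable A E')
    {i : S →ₗ[A] E} {j : S →ₗ[A] E'} (hi : Function.Injective i) (hj : Function.Injective j) :
    Nonempty (E ≃ₗ[A] E') := by
  obtain ⟨f, hf⟩ := Module.Injective.out i hi j
  have hdisj : Disjoint (LinearMap.ker f) (LinearMap.range i) := by
    rw [Submodule.disjoint_def]
    rintro _ hs ⟨s, rfl⟩
    rw [LinearMap.mem_ker, hf, ← j.map_zero] at hs
    rw [hj hs, map_zero]
  have hrange : LinearMap.range i ≠ ⊥ := LinearMap.range_eq_bot.not.mpr (i.ne_zero_of_injective hi)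
  have hker := (hE.eq_bot_or_eq_bot_of_disjoint hdisj).resolve_right hrange
  have : Nontrivial E := hi.nontrivial
  exact hE'.nonempty_linearEquiv_of_injective (LinearMap.ker_eq_bot.mp hker)

end Injective

namespace IsArtinianRing

section

variable (A : Type*) [Ring A] [IsArtinianRing A]

theorem exists_isSimpleModule_submodule (M : Type*) [AddCommGroup M] [Module A M]
    [Nontrivial M] : ∃ S : Submodule A M, IsSimpleModule A S := by
  obtain ⟨x, hx⟩ := exists_ne (0 : M)
  let N := A ∙ x
  have : Nontrivial N := Submodule.nontrivial_iff_ne_bot.mpr (by simpa [N] using hx)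
  have : IsAtomic (Submodule A N) := isAtomic_of_orderBot_wellFounded_lt wellFounded_lt
  obtain ⟨T, hT, -⟩ := (eq_bot_or_exists_atom_le (⊤ : Submodule A N)).resolve_left top_ne_bot
  have := isSimpleModule_iff_isAtom.mpr hT
  exact ⟨T.map N.subtype, .congr (T.equivMapOfInjective _ N.injective_subtype).symm⟩

theorem exists_fin_isSimpleModule_family :
    ∃ (n : ℕ) (T : Fin n → Submodule A (A ⧸ Module.jacobson A A)),
      (∀ i, IsSimpleModule A (T i)) ∧ ∀ (S : Type*) [AddCommGroup S] [Module A S],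
        IsSimpleModule A S → ∃ i, Nonempty (T i ≃ₗ[A] S) := by
  classical
  have : IsSemisimpleModule A (A ⧸ Module.jacobson A A) :=
    (IsArtinian.isSemisimpleModule_iff_jacobson A _).mpr (Module.jacobson_quotient_jacobson A A)
  obtain ⟨n, T, e, hT⟩ := IsSemisimpleModule.exists_linearEquiv_fin_dfinsupp A
    (A ⧸ Module.jacobson A A)
  refine ⟨n, T, hT, fun S _ _ hS ↦ ?_⟩
  have := hS.nontrivial
  obtain ⟨x, hx⟩ := exists_ne (0 : S)
  have hJ : Module.jacobson A A ≤ LinearMap.ker (LinearMap.toSpanSingleton A S x) :=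
    sInf_le (LinearMap.isCoatom_ker_of_surjective (hS.toSpanSingleton_surjective A hx))
  let π := (Module.jacobson A A).liftQ _ hJ ∘ₗ e.symm.toLinearMap
  have hπ : π ≠ 0 := fun h ↦ hx <| by
    have := LinearMap.congr_fun h (e (Submodule.Quotient.mk 1))
    rwa [LinearMap.comp_apply, LinearEquiv.coe_coe, e.symm_apply_apply, Submodule.liftQ_apply,
      LinearMap.toSpanSingleton_apply, one_smul] at this
  obtain ⟨i, hi⟩ : ∃ i, π ∘ₗ DFinsupp.lsingle i ≠ 0 := by
    by_contra! h
    exact hπ (DFinsupp.lhom_ext' (by simpa using h))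
  exact ⟨i, ⟨.ofBijective _ (LinearMap.bijective_of_ne_zero hi)⟩⟩

end

theorem exists_fin_indecomposable_injective (A : Type u) [Ring A] [IsArtinianRing A] :
    ∃ (n : ℕ) (𝓔 : Fin n → ModuleCat.{u} A), ∀ (E : Type u) [AddCommGroup E] [Module A E],
      IsIndecomposable A E → Module.Injective A E → ∃ i, Nonempty (E ≃ₗ[A] 𝓔 i) := by
  classical
  obtain ⟨n, T, hT, hT_classify⟩ := exists_fin_isSimpleModule_family A
  let IsHull (i : Fin n) (E : ModuleCat.{u} A) : Prop := IsIndecomposable A E ∧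
    Module.Injective A E ∧ ∃ f : T i →ₗ[A] E, Function.Injective f
  let 𝓔 i := if h : ∃ E, IsHull i E then h.choose else ModuleCat.of A PUnit
  refine ⟨n, 𝓔, fun E _ _ hE hEinj ↦ ?_⟩
  have : Nontrivial E := let ⟨x, hx⟩ := hE.1; nontrivial_of_ne x 0 hx
  obtain ⟨S, hS⟩ := exists_isSimpleModule_submodule A E
  obtain ⟨i, ⟨e⟩⟩ := hT_classify S hS
  have hS_emb : Function.Injective (S.subtype ∘ₗ e.toLinearMap) :=
    S.injective_subtype.comp e.injective
  have hi : ∃ E', IsHull i E' := ⟨.of A E, hE, hEinj, _, hS_emb⟩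
  obtain ⟨hE', hE'inj, f, hf⟩ := hi.choose_spec
  have := (hT i).nontrivial
  refine ⟨i, ?_⟩
  rw [show 𝓔 i = hi.choose from dif_pos hi]
  exact hE.nonempty_linearEquiv_of_common_submodule hE' hS_emb hf

end IsArtinianRing

theorem stmt16 {R : Type u} [Ring R] [IsArtinian Rᵐᵒᵖ R] :
    ∃ (n : ℕ) (𝓔 : Fin n → ModuleCat.{u} Rᵐᵒᵖ),
      ∀ (E : Type u) [AddCommGroup E] [Module Rᵐᵒᵖ E],
        IsIndecomposable Rᵐᵒᵖ E → Module.Injective Rᵐᵒᵖ E →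
          ∃ i : Fin n, Nonempty (E ≃ₗ[Rᵐᵒᵖ] 𝓔 i) := by
  have : IsArtinianRing Rᵐᵒᵖ := isArtinian_of_linearEquiv (opLinearEquiv Rᵐᵒᵖ)
  exact IsArtinianRing.exists_fin_indecomposable_injective Rᵐᵒᵖ
end
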